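/- arXiv:1612.04161 — 7 statements merged into one kernel-verified Lean document; each statement's English description precedes it below -/
import Mathlib

section
/- Let α, β ∈ ℝⁿ with |α| = |β| = 1. Then for every v ∈ ℝⁿ, |α·v|² + |v − (β·v)β|² ≥ (1/4)(α·β)² |v|². -/
theorem stmt0 (n : ℕ) (α β v : EuclideanSpace ℝ (Fin n))
    (hα : ‖α‖ = 1) (hβ : ‖β‖ = 1) :
    |(inner ℝ α v : ℝ)| ^ 2 + ‖v - ((inner ℝ β v : ℝ)) • β‖ ^ 2 ≥
      (1 / 4) * (inner ℝ α β : ℝ) ^ 2 * ‖v‖ ^ 2 := by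
  set t : ℝ := inner ℝ β v with ht
  set c : ℝ := inner ℝ α β with hc
  set w : EuclideanSpace ℝ (Fin n) := v - t • β with hw
  have hαw : |(inner ℝ α w : ℝ)| ≤ ‖w‖ := by
    have := abs_real_inner_le_norm α w
    simpa [hα] using this
  have hcle : |c| ≤ 1 := by
    have := abs_real_inner_le_norm α β
    simpa [hα, hβ, hc] using this
  have hiw : (inner ℝ α w : ℝ) = inner ℝ α v - c * t := by
    rw [hw, inner_sub_right, real_inner_smul_right, ← hc]; ring
  have hnw : ‖w‖ ^ 2 = ‖v‖ ^ 2 - t ^ 2 := by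
    have h0 : ‖w‖ ^ 2 = ‖v‖ ^ 2 - 2 * (inner ℝ v (t • β) : ℝ) + ‖t • β‖ ^ 2 := by
      rw [hw]; exact norm_sub_sq_real v (t • β)
    have h1 : (inner ℝ v (t • β) : ℝ) = t ^ 2 := by
      rw [real_inner_smul_right, real_inner_comm, ← ht]; ring
    have h2 : ‖t • β‖ ^ 2 = t ^ 2 := by
      rw [norm_smul, hβ]; simp [sq_abs, mul_pow]
    rw [h0, h1, h2]; ring
  have key : |c| * |t| ≤ |(inner ℝ α v : ℝ)| + ‖w‖ := by
    have h3 : |c * t| = |(inner ℝ α v : ℝ) - inner ℝ α w| := by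
      rw [hiw]; ring_nf
    calc |c| * |t| = |c * t| := (abs_mul c t).symm
      _ = |(inner ℝ α v : ℝ) - inner ℝ α w| := h3
      _ ≤ |(inner ℝ α v : ℝ)| + |(inner ℝ α w : ℝ)| := abs_sub _ _
      _ ≤ |(inner ℝ α v : ℝ)| + ‖w‖ := by linarith
  have ha : (0:ℝ) ≤ |(inner ℝ α v : ℝ)| := abs_nonneg _
  have hs : (0:ℝ) ≤ ‖w‖ := norm_nonneg _
  have hvsq : ‖v‖ ^ 2 = t ^ 2 + ‖w‖ ^ 2 := by linarith
  rw [hvsq]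
  nlinarith [sq_nonneg (|(inner ℝ α v : ℝ)| - ‖w‖), sq_nonneg (|c| * |t|),
    mul_le_mul key key (mul_nonneg (abs_nonneg c) (abs_nonneg t)) (by positivity),
    sq_abs c, sq_abs t, mul_self_nonneg (‖w‖), abs_nonneg c,
    mul_le_mul hcle hcle (abs_nonneg c) (by norm_num) ]
end

section
/- Let Bᵢⱼ = (bᵢ + bⱼ)σ + bᵢbⱼ c̄ σ² + δᵢⱼ/cᵢ with σ = 1/(1 − ∑ₖ bₖcₖ) and c ∈ D. Then for all v ∈ ℝⁿ, 4 ∑ᵢⱼ Bᵢⱼvᵢvⱼ ≥ (minⱼ bⱼ / (4 maxⱼ bⱼ)) ∑ᵢ vᵢ²/cᵢ. -/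
set_option maxHeartbeats 1000000 in
/-- coercivity of the quadratic form of the matrix `B`:
`4 ∑ᵢⱼ Bᵢⱼ vᵢ vⱼ ≥ (minⱼ bⱼ / (4 maxⱼ bⱼ)) ∑ᵢ vᵢ²/cᵢ`. -/
theorem stmt7 (n : ℕ) (hn : 0 < n) (b c : Fin n → ℝ)
    (hb : ∀ i, 0 < b i) (hc : ∀ i, 0 < c i) (hbc : ∑ k, b k * c k < 1)
    (σ : ℝ) (hσ : σ = 1 / (1 - ∑ k, b k * c k))
    (B : Fin n → Fin n → ℝ)
    (hB : ∀ i j, B i j = (b i + b j) * σ + b i * b j * (∑ k, c k) * σ ^ 2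
      + (if i = j then (1:ℝ) else 0) / c i)
    (v : Fin n → ℝ) :
    4 * ∑ i, ∑ j, B i j * v i * v j ≥
      ((⨅ j, b j) / (4 * ⨆ j, b j)) * ∑ i, (v i) ^ 2 / c i := by
  haveI : Nonempty (Fin n) := ⟨⟨0, hn⟩⟩
  set s : ℝ := ∑ k, b k * c k with hs
  set S : ℝ := ∑ i, v i with hS
  set T : ℝ := ∑ i, b i * v i with hT
  set Q : ℝ := ∑ i, (v i) ^ 2 / c i with hQdef
  set cbar : ℝ := ∑ k, c k with hcbar
  have hs1 : (0:ℝ) < 1 - s := by linarith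
  have hσ1 : σ * (1 - s) = 1 := by rw [hσ]; field_simp
  set u : ℝ := σ * T with hu
  set y : Fin n → ℝ := fun i => v i / c i + u with hy
  set F : ℝ := ∑ i, c i * (y i) ^ 2 with hF
  -- the quadratic form equals F
  have h1 : ∀ i, ∑ j, B i j * v i * v j =
      (b i * v i) * (σ * S) + v i * (σ * T) + (b i * v i) * (cbar * σ ^ 2 * T)
        + v i ^ 2 / c i := by
    intro i
    have step : ∀ j, B i j * v i * v j =
        (b i * v i * σ) * v j + (v i * σ + b i * v i * cbar * σ ^ 2) * (b j * v j)
          + (if i = j then v i * v i / c i else 0) := by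
      intro j
      rw [hB i j]
      by_cases h : i = j
      · subst h; simp; ring
      · simp [h]; ring
    rw [Finset.sum_congr rfl fun j _ => step j]
    rw [Finset.sum_add_distrib, Finset.sum_add_distrib, ← Finset.mul_sum,
      ← Finset.mul_sum, Finset.sum_ite_eq]
    simp only [Finset.mem_univ, if_true, ← hS, ← hT]
    ring
  have hL : ∑ i, ∑ j, B i j * v i * v j = Q + 2 * u * S + cbar * u ^ 2 := by
    rw [Finset.sum_congr rfl fun i _ => h1 i]
    rw [Finset.sum_add_distrib, Finset.sum_add_distrib, Finset.sum_add_distrib,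
      ← Finset.sum_mul, ← Finset.sum_mul, ← Finset.sum_mul, ← hT, ← hS, ← hQdef, hu]
    ring
  have hR : F = Q + 2 * u * S + cbar * u ^ 2 := by
    have step : ∀ i, c i * (y i) ^ 2 = v i ^ 2 / c i + (2 * u) * v i + c i * u ^ 2 := by
      intro i
      have hci := (hc i).ne'
      simp only [hy]
      field_simp
      ring
    rw [hF, Finset.sum_congr rfl fun i _ => step i, Finset.sum_add_distrib,
      Finset.sum_add_distrib, ← Finset.mul_sum, ← Finset.sum_mul, ← hS, ← hQdef, ← hcbar]
  have hform : ∑ i, ∑ j, B i j * v i * v j = F := by rw [hL, hR]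
  -- F ≥ 0
  have hF0 : 0 ≤ F := Finset.sum_nonneg fun i _ => mul_nonneg (hc i).le (sq_nonneg _)
  -- min and max
  set m : ℝ := ⨅ j, b j with hm
  set M : ℝ := ⨆ j, b j with hM
  have hmle : ∀ i, m ≤ b i := fun i => ciInf_le (Set.Finite.bddBelow (Set.finite_range b)) i
  have hleM : ∀ i, b i ≤ M := fun i => le_ciSup (Set.Finite.bddAbove (Set.finite_range b)) i
  obtain ⟨i0, hi0⟩ := Finite.exists_min b
  have hm0 : 0 < m := lt_of_lt_of_le (hb i0) (le_ciInf hi0)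
  have hM0 : 0 < M := lt_of_lt_of_le (hb i0) (hleM i0)
  have hmM : m ≤ M := le_trans (hmle i0) (hleM i0)
  -- u = ∑ b i * c i * y i
  have huy : u = ∑ i, b i * c i * y i := by
    have : ∑ i, b i * c i * y i = T + u * s := by
      simp only [hy]
      rw [Finset.sum_congr rfl (fun i _ => by
        have hci := (hc i).ne'
        show b i * c i * (v i / c i + u) = b i * v i + u * (b i * c i)
        field_simp)]
      rw [Finset.sum_add_distrib, ← Finset.mul_sum, ← hT]
    rw [this, hu]
    linear_combination T * hσ1
  -- Cauchy-Schwarz : u^2 ≤ (∑ b i ^2 * c i) * F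
  have hCS : u ^ 2 ≤ (∑ i, b i ^ 2 * c i) * F := by
    have key := Finset.sum_mul_sq_le_sq_mul_sq Finset.univ
      (fun i => b i * Real.sqrt (c i)) (fun i => Real.sqrt (c i) * y i)
    have e1 : ∑ i, (b i * Real.sqrt (c i)) * (Real.sqrt (c i) * y i) = u := by
      rw [huy]
      exact Finset.sum_congr rfl fun i _ => by
        rw [show b i * Real.sqrt (c i) * (Real.sqrt (c i) * y i)
          = b i * (Real.sqrt (c i) * Real.sqrt (c i)) * y i by ring,
          Real.mul_self_sqrt (hc i).le]
    have e2 : ∑ i, (b i * Real.sqrt (c i)) ^ 2 = ∑ i, b i ^ 2 * c i :=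
      Finset.sum_congr rfl fun i _ => by
        rw [mul_pow, Real.sq_sqrt (hc i).le]
    have e3 : ∑ i, (Real.sqrt (c i) * y i) ^ 2 = F :=
      Finset.sum_congr rfl fun i _ => by
        rw [mul_pow, Real.sq_sqrt (hc i).le]
    rw [e1, e2, e3] at key
    exact key
  have hb2c : ∑ i, b i ^ 2 * c i ≤ M * s := by
    rw [hs, Finset.mul_sum]
    exact Finset.sum_le_sum fun i _ => by
      have h := hleM i
      nlinarith [mul_nonneg (sub_nonneg.2 h) (mul_nonneg (hb i).le (hc i).le)]
  have hu2 : u ^ 2 ≤ M * F := by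
    have h2 : (∑ i, b i ^ 2 * c i) * F ≤ M * s * F :=
      mul_le_mul_of_nonneg_right hb2c hF0
    nlinarith [mul_nonneg hM0.le hF0]
  -- cbar * m ≤ s  (in fact < 1)
  have hcbarm : m * cbar ≤ s := by
    rw [hcbar, hs, Finset.mul_sum]
    exact Finset.sum_le_sum fun i _ => by
      have := hmle i
      nlinarith [(hc i).le]
  have hcbar0 : 0 ≤ cbar := Finset.sum_nonneg fun i _ => (hc i).le
  -- Q ≤ 2F + 2 cbar u^2
  have hQle : Q ≤ 2 * F + 2 * cbar * u ^ 2 := by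
    have step : ∀ i, v i ^ 2 / c i ≤ 2 * (c i * y i ^ 2) + 2 * (c i * u ^ 2) := by
      intro i
      have hci := hc i
      have hyu : y i - u = v i / c i := by simp [hy]
      have hv : v i ^ 2 / c i = c i * (y i - u) ^ 2 := by
        rw [hyu]
        field_simp
      rw [hv]
      nlinarith [mul_nonneg hci.le (sq_nonneg (y i + u))]
    calc Q ≤ ∑ i, (2 * (c i * y i ^ 2) + 2 * (c i * u ^ 2)) :=
          Finset.sum_le_sum fun i _ => step i
      _ = 2 * F + 2 * cbar * u ^ 2 := by
          rw [Finset.sum_add_distrib, ← Finset.mul_sum, ← Finset.mul_sum, hF,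
            ← Finset.sum_mul, ← hcbar]
          ring
  -- combine: m * Q ≤ 4 * M * F
  have hmQ : m * Q ≤ 2 * m * F + 2 * M * F := by
    have h3 : m * Q ≤ m * (2 * F + 2 * cbar * u ^ 2) :=
      mul_le_mul_of_nonneg_left hQle hm0.le
    have h4 : m * cbar * u ^ 2 ≤ s * u ^ 2 := by nlinarith [sq_nonneg u]
    have h5 : s * u ^ 2 ≤ u ^ 2 := by
      nlinarith [sq_nonneg u]
    nlinarith [hu2]
  rw [hform, ge_iff_le, div_mul_eq_mul_div, div_le_iff₀ (by positivity)]
  nlinarith [mul_nonneg hM0.le hF0, mul_nonneg hm0.le hF0]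
end

section
/- Let (aᵢⱼ) be a symmetric matrix with aᵢⱼ > 0 and maximal eigenvalue λ*. Then for c ∈ D and v ∈ ℝⁿ, ∑ᵢⱼ aᵢⱼvᵢvⱼ ≤ (λ*/minⱼ bⱼ) ∑ᵢ vᵢ²/cᵢ. -/
/-!
Rescale `v` by `wᵢ = |vᵢ| / √cᵢ`. Since `√cᵢ √cⱼ ≤ c̄ = ∑ₖ cₖ` and `aᵢⱼ ≥ 0`, the quadratic form
of `v` is at most `c̄` times that of `w`, which the Rayleigh bound controls by `λ c̄ ∑ vᵢ² / cᵢ`.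
Finally `(minⱼ bⱼ) c̄ ≤ ∑ⱼ bⱼ cⱼ < 1`.
-/

open Finset

namespace QuadraticBound

variable {ι : Type*} [Fintype ι]

lemma sqrt_mul_sqrt_le_sum {c : ι → ℝ} (hc : ∀ i, 0 ≤ c i) (i j : ι) :
    √(c i) * √(c j) ≤ ∑ k, c k := by
  have hle : ∀ i, c i ≤ ∑ k, c k := fun i =>
    single_le_sum (fun k _ => hc k) (mem_univ i)
  calc √(c i) * √(c j) ≤ √(∑ k, c k) * √(∑ k, c k) := by
        gcongr <;> exact hle _
    _ = ∑ k, c k := Real.mul_self_sqrt (sum_nonneg fun k _ => hc k)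

lemma quadForm_le_sum_mul_quadForm_abs_div_sqrt {a : ι → ι → ℝ} {c : ι → ℝ}
    (ha : ∀ i j, 0 ≤ a i j) (hc : ∀ i, 0 < c i) (v : ι → ℝ) :
    ∑ i, ∑ j, a i j * v i * v j ≤
      (∑ k, c k) * ∑ i, ∑ j, a i j * (|v i| / √(c i)) * (|v j| / √(c j)) := by
  simp only [mul_sum]
  refine sum_le_sum fun i _ => sum_le_sum fun j _ => ?_
  have hsqrt : ∀ i, √(c i) ≠ 0 := fun i => (Real.sqrt_pos.mpr (hc i)).ne'
  calc a i j * v i * v j ≤ a i j * (|v i| * |v j|) := by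
        rw [mul_assoc, ← abs_mul]
        exact mul_le_mul_of_nonneg_left (le_abs_self _) (ha i j)
    _ = (√(c i) * √(c j)) * (a i j * (|v i| / √(c i)) * (|v j| / √(c j))) := by
        field_simp [hsqrt i, hsqrt j]
    _ ≤ (∑ k, c k) * (a i j * (|v i| / √(c i)) * (|v j| / √(c j))) := by
        have := ha i j
        gcongr
        exact sqrt_mul_sqrt_le_sum (fun k => (hc k).le) i j

lemma nonneg_of_quadForm_le [Nonempty ι] {a : ι → ι → ℝ} (ha : ∀ i j, 0 ≤ a i j) {lam : ℝ}
    (hlam : ∀ w : ι → ℝ, ∑ i, ∑ j, a i j * w i * w j ≤ lam * ∑ i, (w i) ^ 2) :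
    0 ≤ lam := by
  have h := hlam fun _ => 1
  simp only [mul_one, one_pow, sum_const, card_univ, nsmul_eq_mul] at h
  have hcard : (0 : ℝ) < Fintype.card ι := by exact_mod_cast Fintype.card_pos
  have hsum : 0 ≤ ∑ i, ∑ j, a i j := sum_nonneg fun i _ => sum_nonneg fun j _ => ha i j
  exact nonneg_of_mul_nonneg_left (hsum.trans h) hcard

lemma sum_le_inv_of_sum_mul_le_one {b c : ι → ℝ} {m : ℝ} (hm : 0 < m) (hmb : ∀ j, m ≤ b j)
    (hc : ∀ j, 0 ≤ c j) (hbc : ∑ j, b j * c j ≤ 1) :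
    ∑ j, c j ≤ m⁻¹ := by
  rw [← one_div, le_div_iff₀' hm, mul_sum]
  calc ∑ j, m * c j ≤ ∑ j, b j * c j := sum_le_sum fun j _ => by gcongr; exacts [hc j, hmb j]
    _ ≤ 1 := hbc

end QuadraticBound

open QuadraticBound in
theorem stmt8_general (n : ℕ) (b c : Fin n → ℝ) (a : Fin n → Fin n → ℝ)
    (hb : ∀ i, 0 < b i) (hapos : ∀ i j, 0 < a i j)
    (lam : ℝ)
    (hlam : ∀ w : Fin n → ℝ, ∑ i, ∑ j, a i j * w i * w j ≤ lam * ∑ i, (w i) ^ 2)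
    (hc : ∀ i, 0 < c i) (hbc : ∑ j, b j * c j < 1)
    (v : Fin n → ℝ) :
    ∑ i, ∑ j, a i j * v i * v j ≤ (lam / ⨅ j, b j) * ∑ i, (v i) ^ 2 / c i := by
  rcases isEmpty_or_nonempty (Fin n) with _ | _
  · simp
  have ha : ∀ i j, 0 ≤ a i j := fun i j => (hapos i j).le
  have hm : 0 < ⨅ j, b j := by
    obtain ⟨j, hj⟩ := exists_eq_ciInf_of_finite (f := b)
    exact hj ▸ hb j
  have hcsum : ∑ j, c j ≤ (⨅ j, b j)⁻¹ :=
    sum_le_inv_of_sum_mul_le_one hm (ciInf_le (Finite.bddBelow_range b)) (fun j => (hc j).le) hbc.le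
  have hw : ∀ i, (|v i| / √(c i)) ^ 2 = v i ^ 2 / c i := fun i => by
    rw [div_pow, sq_abs, Real.sq_sqrt (hc i).le]
  calc ∑ i, ∑ j, a i j * v i * v j
      ≤ (∑ k, c k) * ∑ i, ∑ j, a i j * (|v i| / √(c i)) * (|v j| / √(c j)) :=
        quadForm_le_sum_mul_quadForm_abs_div_sqrt ha hc v
    _ ≤ (∑ k, c k) * (lam * ∑ i, v i ^ 2 / c i) := by
        simp only [← hw]
        gcongr
        · exact sum_nonneg fun k _ => (hc k).le
        · exact hlam _
    _ ≤ (⨅ j, b j)⁻¹ * (lam * ∑ i, v i ^ 2 / c i) := by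
        gcongr
        exact mul_nonneg (nonneg_of_quadForm_le ha hlam)
          (sum_nonneg fun i _ => div_nonneg (sq_nonneg _) (hc i).le)
    _ = (lam / ⨅ j, b j) * ∑ i, (v i) ^ 2 / c i := by ring

/-- bound on the attraction quadratic form in terms of the
maximal eigenvalue `λ*` of the symmetric matrix `(aᵢⱼ)` (characterized by the
Rayleigh quotient bound) and `minⱼ bⱼ`. -/
theorem stmt8 (n : ℕ) (hn : 0 < n) (b c : Fin n → ℝ) (a : Fin n → Fin n → ℝ)
    (hb : ∀ i, 0 < b i) (ha : ∀ i j, a i j = a j i) (hapos : ∀ i j, 0 < a i j)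
    (lam : ℝ)
    (hlam : ∀ w : Fin n → ℝ, ∑ i, ∑ j, a i j * w i * w j ≤ lam * ∑ i, (w i) ^ 2)
    (hc : ∀ i, 0 < c i) (hbc : ∑ j, b j * c j < 1)
    (v : Fin n → ℝ) :
    ∑ i, ∑ j, a i j * v i * v j ≤ (lam / ⨅ j, b j) * ∑ i, (v i) ^ 2 / c i :=
  stmt8_general n b c a hb hapos lam hlam hc hbc v
end

section
/- Let D(c) be a symmetric n×n matrix satisfying D₀|Πv|² ≤ v·D(c)v for all v ∈ ℝⁿ, where Π = I − ℓ⊗ℓ with ℓ = (1,…,1)/√n. Set B(c) = c⊗c + ε D(c) for c ∈ D and ε > 0. Then there exists k_B > 0, depending only on ε D₀ and b₁,…,bₙ, such that v·B(c)v ≥ k_B (c̄²|v|² + |Πv|²) for all v ∈ ℝⁿ and c ∈ D. -/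
set_option maxHeartbeats 1600000


/-- Lemma 3.4, first part: with `B(c) = c ⊗ c + ε D(c)` and a
hypocoercive diffusion matrix `D`, there is `k_B > 0` such that
`v ⬝ B(c) v ≥ k_B (c̄² |v|² + |Π v|²)` for all `v ∈ ℝⁿ` and `c ∈ D`. -/
theorem stmt11 (n : ℕ) (hn : 0 < n) (b : Fin n → ℝ) (hb : ∀ i, 0 < b i)
    (ε D₀ : ℝ) (hε : 0 < ε) (hD₀ : 0 < D₀)
    (Dm : (Fin n → ℝ) → Fin n → Fin n → ℝ)
    (hsym : ∀ c i j, Dm c i j = Dm c j i)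
    (ℓ : Fin n → ℝ) (hℓ : ∀ i, ℓ i = 1 / Real.sqrt n)
    (hcoer : ∀ (c : Fin n → ℝ), (∀ i, 0 < c i) → (∑ j, b j * c j < 1) →
      ∀ v : Fin n → ℝ,
        D₀ * ∑ i, (v i - (∑ j, ℓ j * v j) * ℓ i) ^ 2 ≤
          ∑ i, ∑ j, Dm c i j * v i * v j) :
    ∃ kB > 0, ∀ (c : Fin n → ℝ), (∀ i, 0 < c i) → (∑ j, b j * c j < 1) →
      ∀ v : Fin n → ℝ,
        (∑ i, c i * v i) ^ 2 + ε * ∑ i, ∑ j, Dm c i j * v i * v j ≥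
          kB * ((∑ i, c i) ^ 2 * ∑ i, (v i) ^ 2
            + ∑ i, (v i - (∑ j, ℓ j * v j) * ℓ i) ^ 2) := by
  haveI : Nonempty (Fin n) := ⟨⟨0, hn⟩⟩
  have hn0 : (0:ℝ) < n := by exact_mod_cast hn
  have hn1 : (1:ℝ) ≤ n := by exact_mod_cast hn
  have hsq : Real.sqrt n ^ 2 = (n:ℝ) := Real.sq_sqrt hn0.le
  have hs0 : (0:ℝ) < Real.sqrt n := Real.sqrt_pos.mpr hn0
  set m : ℝ := Finset.univ.inf' Finset.univ_nonempty b with hm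
  have hm0 : 0 < m := by
    rw [hm]
    exact (Finset.lt_inf'_iff _).mpr (fun i _ => hb i)
  set M : ℝ := 1 / m with hM
  have hM0 : 0 < M := by positivity
  set θ : ℝ := min 1 (ε * D₀ / (2 * M ^ 2)) with hθ
  have hθ0 : 0 < θ := lt_min one_pos (by positivity)
  have hθ1 : θ ≤ 1 := min_le_left _ _
  have hθ2 : θ * M ^ 2 ≤ ε * D₀ / 2 := by
    have := min_le_right 1 (ε * D₀ / (2 * M ^ 2))
    calc θ * M ^ 2 ≤ (ε * D₀ / (2 * M ^ 2)) * M ^ 2 := by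
          apply mul_le_mul_of_nonneg_right this (by positivity)
      _ = ε * D₀ / 2 := by field_simp
  refine ⟨min (θ / (2 * n)) (ε * D₀ / (2 * (M ^ 2 + 1))),
    lt_min (by positivity) (by positivity), ?_⟩
  set kB : ℝ := min (θ / (2 * n)) (ε * D₀ / (2 * (M ^ 2 + 1))) with hkB
  have hkB0 : 0 < kB := lt_min (by positivity) (by positivity)
  have hk1 : kB * (2 * n) ≤ θ := by
    have := min_le_left (θ / (2 * n)) (ε * D₀ / (2 * (M ^ 2 + 1)))
    calc kB * (2 * n) ≤ θ / (2 * n) * (2 * n) := by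
          apply mul_le_mul_of_nonneg_right this (by positivity)
      _ = θ := by field_simp
  have hk2 : kB * (M ^ 2 + 1) ≤ ε * D₀ / 2 := by
    have := min_le_right (θ / (2 * n)) (ε * D₀ / (2 * (M ^ 2 + 1)))
    calc kB * (M ^ 2 + 1) ≤ (ε * D₀ / (2 * (M ^ 2 + 1))) * (M ^ 2 + 1) := by
          apply mul_le_mul_of_nonneg_right this (by positivity)
      _ = ε * D₀ / 2 := by field_simp
  intro c hc hbc v
  set S : ℝ := ∑ j, ℓ j * v j with hS
  set P : ℝ := ∑ i, (v i - S * ℓ i) ^ 2 with hP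
  set T : ℝ := ∑ i, (v i) ^ 2 with hT
  set cb : ℝ := ∑ i, c i with hcb
  -- basic positivity
  have hP0 : 0 ≤ P := Finset.sum_nonneg fun i _ => sq_nonneg _
  have hcb0 : 0 < cb := Finset.sum_pos (fun i _ => hc i) Finset.univ_nonempty
  -- c̄ < M
  have hcbM : cb ≤ M := by
    have h1 : m * cb ≤ ∑ j, b j * c j := by
      rw [hcb, Finset.mul_sum]
      apply Finset.sum_le_sum
      intro i _
      exact mul_le_mul_of_nonneg_right (Finset.inf'_le _ (Finset.mem_univ i)) (hc i).le
    have h2 : m * cb < 1 := lt_of_le_of_lt h1 hbc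
    rw [hM, le_div_iff₀ hm0]
    nlinarith
  -- sum of ℓ² is 1
  have hℓsq : ∑ i, ℓ i ^ 2 = 1 := by
    have heach : ∀ i : Fin n, ℓ i ^ 2 = 1 / n := fun i => by
      rw [hℓ, div_pow, one_pow, hsq]
    rw [Finset.sum_congr rfl fun i _ => heach i, Finset.sum_const, Finset.card_univ,
      Fintype.card_fin, nsmul_eq_mul]
    field_simp
  -- P = T - S²
  have hPT : P = T - S ^ 2 := by
    have expand : ∀ i : Fin n, (v i - S * ℓ i) ^ 2
        = v i ^ 2 - 2 * S * (ℓ i * v i) + S ^ 2 * ℓ i ^ 2 := fun i => by ring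
    rw [hP, Finset.sum_congr rfl fun i _ => expand i]
    rw [Finset.sum_add_distrib, Finset.sum_sub_distrib, ← Finset.mul_sum, ← Finset.mul_sum,
      hℓsq, ← hS, ← hT]
    ring
  -- decomposition of c·v
  set A : ℝ := ∑ i, c i * (v i - S * ℓ i) with hA
  have hclsum : ∑ i, c i * ℓ i = cb / Real.sqrt n := by
    have : ∀ i : Fin n, c i * ℓ i = c i / Real.sqrt n := fun i => by
      rw [hℓ]; ring
    rw [Finset.sum_congr rfl fun i _ => this i, ← Finset.sum_div, ← hcb]
  have hdecomp : ∑ i, c i * v i = A + S * (cb / Real.sqrt n) := by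
    have : ∀ i : Fin n, c i * (v i - S * ℓ i) = c i * v i - S * (c i * ℓ i) := fun i => by ring
    rw [hA, Finset.sum_congr rfl fun i _ => this i, Finset.sum_sub_distrib, ← Finset.mul_sum,
      hclsum]
    ring
  -- Cauchy–Schwarz : A² ≤ (∑ cᵢ²) * P ≤ cb² * P
  have hCS : A ^ 2 ≤ cb ^ 2 * P := by
    have h1 : A ^ 2 ≤ (∑ i, c i ^ 2) * ∑ i, (v i - S * ℓ i) ^ 2 :=
      Finset.sum_mul_sq_le_sq_mul_sq Finset.univ c (fun i => v i - S * ℓ i)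
    have h2 : (∑ i, c i ^ 2) ≤ cb ^ 2 := by
      rw [hcb]
      exact Finset.sum_sq_le_sq_sum_of_nonneg (fun i _ => (hc i).le)
    calc A ^ 2 ≤ (∑ i, c i ^ 2) * P := h1
      _ ≤ cb ^ 2 * P := mul_le_mul_of_nonneg_right h2 hP0
  -- coercivity of D
  have hD : D₀ * P ≤ ∑ i, ∑ j, Dm c i j * v i * v j := hcoer c hc hbc v
  -- key lower bound on (c·v)²
  set K : ℝ := S * (cb / Real.sqrt n) with hK
  have hKsq : K ^ 2 = cb ^ 2 * S ^ 2 / n := by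
    rw [hK]
    field_simp
    linear_combination (-S ^ 2) * hsq
  have hkey : cb ^ 2 * S ^ 2 / (2 * n) - cb ^ 2 * P ≤ (∑ i, c i * v i) ^ 2 := by
    rw [hdecomp]
    have h1 : K ^ 2 / 2 - A ^ 2 ≤ (A + K) ^ 2 := by linarith [sq_nonneg (2 * A + K)]
    have h2 : cb ^ 2 * S ^ 2 / (2 * n) = K ^ 2 / 2 := by rw [hKsq]; ring
    linarith [hCS]
  have hX0 : (0:ℝ) ≤ (∑ i, c i * v i) ^ 2 := sq_nonneg _
  set X : ℝ := (∑ i, c i * v i) ^ 2 with hX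
  -- put everything together
  have hT' : T = P + S ^ 2 := by linarith [hPT]
  rw [ge_iff_le, hT']
  have hεD : ε * D₀ * P ≤ ε * ∑ i, ∑ j, Dm c i j * v i * v j := by
    calc ε * D₀ * P = ε * (D₀ * P) := by ring
      _ ≤ _ := mul_le_mul_of_nonneg_left hD hε.le
  have hθcb : θ * cb ^ 2 ≤ ε * D₀ / 2 := by
    calc θ * cb ^ 2 ≤ θ * M ^ 2 :=
          mul_le_mul_of_nonneg_left (pow_le_pow_left₀ hcb0.le hcbM 2) hθ0.le
      _ ≤ ε * D₀ / 2 := hθ2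
  have hkcb : kB * (cb ^ 2 + 1) ≤ ε * D₀ / 2 := by
    calc kB * (cb ^ 2 + 1) ≤ kB * (M ^ 2 + 1) :=
          mul_le_mul_of_nonneg_left
            (add_le_add_left (pow_le_pow_left₀ hcb0.le hcbM 2) 1) hkB0.le
      _ ≤ ε * D₀ / 2 := hk2
  have l1 : θ * X ≤ X := mul_le_of_le_one_left hX0 hθ1
  have l2 : θ * (cb ^ 2 * S ^ 2 / (2 * n)) - θ * (cb ^ 2 * P) ≤ θ * X := by
    have h := mul_le_mul_of_nonneg_left hkey hθ0.le
    rw [mul_sub] at h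
    exact h
  have l3 : ε * D₀ / 2 * P ≤ ε * D₀ * P - θ * (cb ^ 2 * P) := by
    have h := mul_le_mul_of_nonneg_right hθcb hP0
    linarith [h]
  have l4 : kB * cb ^ 2 * S ^ 2 ≤ θ * (cb ^ 2 * S ^ 2 / (2 * n)) := by
    have h := mul_le_mul_of_nonneg_right hk1
      (show (0:ℝ) ≤ cb ^ 2 * S ^ 2 / (2 * n) by positivity)
    have he : kB * (2 * n) * (cb ^ 2 * S ^ 2 / (2 * n)) = kB * cb ^ 2 * S ^ 2 := by
      field_simp
    linarith [he ▸ h]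
  have l5 : kB * (cb ^ 2 + 1) * P ≤ ε * D₀ / 2 * P := mul_le_mul_of_nonneg_right hkcb hP0
  have hgoal : kB * (cb ^ 2 * (P + S ^ 2) + P)
      = kB * cb ^ 2 * S ^ 2 + kB * (cb ^ 2 + 1) * P := by ring
  rw [hgoal]
  linarith [hεD, l1, l2, l3, l4, l5]
end

section
/- Assume K := 1 − max_{i,j} bᵢ⁻¹aᵢⱼ > 0. Then for all c ∈ D, the van der Waals pressure p = c̄/(1 − ∑ⱼ bⱼcⱼ) − ∑ᵢⱼ aᵢⱼcᵢcⱼ satisfies p ≥ K c̄; in particular p > 0. -/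
/-!
Bounding `aᵢⱼ ≤ M bᵢ` with `M = max bᵢ⁻¹ aᵢⱼ` gives `∑ᵢⱼ aᵢⱼ cᵢ cⱼ ≤ M (∑ⱼ bⱼ cⱼ) c̄ ≤ M c̄`,
since `∑ⱼ bⱼ cⱼ < 1`; together with `c̄ / (1 - ∑ⱼ bⱼ cⱼ) ≥ c̄` this yields `p ≥ (1 - M) c̄`.
-/

open Finset

theorem le_ciSup_ciSup_of_finite {ι κ : Type*} [Finite ι] [Finite κ] (f : ι → κ → ℝ)
    (i : ι) (j : κ) : f i j ≤ ⨆ i, ⨆ j, f i j :=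
  (le_ciSup (Set.finite_range _).bddAbove j).trans
    (le_ciSup (f := fun i => ⨆ j, f i j) (Set.finite_range _).bddAbove i)

section VanDerWaals

variable {ι : Type*} [Fintype ι] (a : ι → ι → ℝ) (b c : ι → ℝ)

theorem sum_sum_mul_mul_le_of_le_mul {M : ℝ} (ha : ∀ i j, a i j ≤ M * b i)
    (hc : ∀ i, 0 ≤ c i) :
    ∑ i, ∑ j, a i j * c i * c j ≤ M * (∑ j, b j * c j) * ∑ i, c i := calc
  ∑ i, ∑ j, a i j * c i * c j ≤ ∑ i, ∑ j, M * b i * c i * c j := by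
    gcongr with i _ j _
    · exact hc j
    · exact hc i
    · exact ha i j
  _ = M * (∑ j, b j * c j) * ∑ i, c i := by
    rw [mul_assoc, sum_mul_sum]
    simp only [mul_sum]
    exact sum_congr rfl fun i _ => sum_congr rfl fun j _ => by ring

theorem one_sub_mul_sum_le_vanDerWaals {M : ℝ} (hM : 0 ≤ M) (ha : ∀ i j, a i j ≤ M * b i)
    (hb : ∀ i, 0 ≤ b i) (hc : ∀ i, 0 ≤ c i) (hbc : ∑ j, b j * c j < 1) :
    (1 - M) * ∑ i, c i ≤
      (∑ i, c i) / (1 - ∑ j, b j * c j) - ∑ i, ∑ j, a i j * c i * c j := by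
  have hS : 0 ≤ ∑ j, b j * c j := sum_nonneg fun j _ => mul_nonneg (hb j) (hc j)
  have hC : 0 ≤ ∑ i, c i := sum_nonneg fun i _ => hc i
  have hdiv : ∑ i, c i ≤ (∑ i, c i) / (1 - ∑ j, b j * c j) :=
    le_div_self hC (by linarith) (by linarith)
  have hquad : M * (∑ j, b j * c j) * ∑ i, c i ≤ M * ∑ i, c i := by
    rw [mul_assoc]
    gcongr
    exact mul_le_of_le_one_left hC hbc.le
  linarith [sum_sum_mul_mul_le_of_le_mul a b c ha hc]

end VanDerWaals

/-- under `K := 1 - max_{i,j} bᵢ⁻¹ aᵢⱼ > 0`, the van der Waals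
pressure satisfies `p ≥ K c̄ > 0` on the domain `D`. -/
theorem stmt12 (n : ℕ) (hn : 0 < n) (b : Fin n → ℝ) (a : Fin n → Fin n → ℝ)
    (hb : ∀ i, 0 < b i) (hapos : ∀ i j, 0 < a i j)
    (K : ℝ) (hK : K = 1 - ⨆ i, ⨆ j, a i j / b i) (hKpos : 0 < K)
    (c : Fin n → ℝ) (hc : ∀ i, 0 < c i) (hbc : ∑ j, b j * c j < 1)
    (p : ℝ)
    (hp : p = (∑ i, c i) / (1 - ∑ j, b j * c j) - ∑ i, ∑ j, a i j * c i * c j) :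
    p ≥ K * ∑ i, c i ∧ 0 < p := by
  set M := ⨆ i, ⨆ j, a i j / b i
  have hle (i j) : a i j / b i ≤ M := le_ciSup_ciSup_of_finite (fun i j => a i j / b i) i j
  have hM : 0 ≤ M := (div_pos (hapos ⟨0, hn⟩ ⟨0, hn⟩) (hb _)).le.trans (hle _ _)
  have hpK : K * ∑ i, c i ≤ p := by
    rw [hK, hp]
    exact one_sub_mul_sum_le_vanDerWaals a b c hM (fun i j => (div_le_iff₀ (hb i)).mp (hle i j))
      (fun i => (hb i).le) (fun i => (hc i).le) hbc
  have hC : 0 < ∑ i, c i := sum_pos (fun i _ => hc i) ⟨⟨0, hn⟩, mem_univ _⟩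
  exact ⟨hpK, (mul_pos hKpos hC).trans_le hpK⟩
end

section
/- For the van der Waals pressure p and free energy F with c ∈ D, the quantity D̃(c) = ∑ᵢⱼ cᵢcⱼ ∂²F/∂cᵢ∂cⱼ satisfies the identity D̃ = c̄/(1 − ∑ᵢ bᵢcᵢ)² − ∑ᵢⱼ aᵢⱼcᵢcⱼ, and consequently D̃ ≥ p. -/
/-! Contracting the Hessian with `c` gives `c̄ (1 + 2Sσ + S²σ²) - ∑ aᵢⱼcᵢcⱼ` with `S = ∑ bᵢcᵢ`,
and `1 + Sσ = σ` since `σ (1 - S) = 1`; so `D̃ = c̄ σ² - ∑ aᵢⱼcᵢcⱼ`, while `p = c̄ σ - ∑ aᵢⱼcᵢcⱼ`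
and `σ ≥ 1`. -/

open Finset

section Contraction

variable {ι : Type*} [Fintype ι] (a : ι → ι → ℝ) (b c : ι → ℝ)

lemma sum_sum_mul_mul_add : ∑ i, ∑ j, c i * c j * (b i + b j)
    = 2 * (∑ i, b i * c i) * ∑ i, c i := by
  have h : ∀ i j, c i * c j * (b i + b j) = b i * c i * c j + c i * (b j * c j) := by
    intros; ring
  simp_rw [h, sum_add_distrib, ← sum_mul_sum]
  ring

lemma sum_sum_mul_mul_mul : ∑ i, ∑ j, c i * c j * (b i * b j) = (∑ i, b i * c i) ^ 2 := by
  rw [sq, sum_mul_sum]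
  congr! 2 with i _ j
  ring

lemma sum_sum_mul_mul_ite_div [DecidableEq ι] :
    ∑ i, ∑ j, c i * c j * ((if i = j then 1 else 0) / c i) = ∑ i, c i := by
  simp_rw [mul_div_assoc', mul_ite, mul_one, mul_zero, ite_div, zero_div, sum_ite_eq, mem_univ,
    if_true, mul_self_div_self]

lemma sum_sum_mul_mul_vanDerWaalsHessian [DecidableEq ι] (s t : ℝ) :
    ∑ i, ∑ j, c i * c j * ((b i + b j) * s + b i * b j * t * s ^ 2
      + (if i = j then 1 else 0) / c i - a i j)
    = 2 * s * (∑ i, b i * c i) * (∑ i, c i) + t * s ^ 2 * (∑ i, b i * c i) ^ 2 + ∑ i, c i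
      - ∑ i, ∑ j, a i j * c i * c j := by
  have h : ∀ i j, c i * c j * ((b i + b j) * s + b i * b j * t * s ^ 2
      + (if i = j then 1 else 0) / c i - a i j)
      = s * (c i * c j * (b i + b j)) + t * s ^ 2 * (c i * c j * (b i * b j))
        + c i * c j * ((if i = j then 1 else 0) / c i) - a i j * c i * c j := by
    intros; ring
  simp_rw [h, sum_sub_distrib, sum_add_distrib, ← mul_sum, sum_sum_mul_mul_add,
    sum_sum_mul_mul_mul, sum_sum_mul_mul_ite_div]
  ring

end Contraction

lemma div_le_div_sq {x y : ℝ} (hx : 0 ≤ x) (hy₀ : 0 < y) (hy₁ : y ≤ 1) : x / y ≤ x / y ^ 2 :=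
  div_le_div_of_nonneg_left hx (by positivity) (pow_le_of_le_one hy₀.le hy₁ two_ne_zero)

theorem stmt13_general (n : ℕ) (b : Fin n → ℝ) (a : Fin n → Fin n → ℝ)
    (hb : ∀ i, 0 < b i)
    (c : Fin n → ℝ) (hc : ∀ i, 0 < c i) (hbc : ∑ j, b j * c j < 1)
    (σ : ℝ) (hσ : σ = 1 / (1 - ∑ k, b k * c k))
    (H : Fin n → Fin n → ℝ)
    (hH : ∀ i j, H i j = (b i + b j) * σ + b i * b j * (∑ k, c k) * σ ^ 2
      + (if i = j then (1:ℝ) else 0) / c i - a i j)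
    (Dt p : ℝ)
    (hDt : Dt = ∑ i, ∑ j, c i * c j * H i j)
    (hp : p = (∑ i, c i) / (1 - ∑ j, b j * c j) - ∑ i, ∑ j, a i j * c i * c j) :
    Dt = (∑ i, c i) / (1 - ∑ i, b i * c i) ^ 2 - ∑ i, ∑ j, a i j * c i * c j
      ∧ Dt ≥ p := by
  set S := ∑ k, b k * c k
  set T := ∑ k, c k
  have hS₀ : 0 ≤ S := sum_nonneg fun k _ => (mul_pos (hb k) (hc k)).le
  have hT₀ : 0 ≤ T := sum_nonneg fun k _ => (hc k).le
  have hS₁ : 1 - S ≠ 0 := by linarith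
  have hDt_eq : Dt = T / (1 - S) ^ 2 - ∑ i, ∑ j, a i j * c i * c j := by
    simp_rw [hDt, hH, sum_sum_mul_mul_vanDerWaalsHessian, hσ]
    field_simp
    ring
  refine ⟨hDt_eq, ?_⟩
  rw [hDt_eq, hp]
  linarith [div_le_div_sq hT₀ (by linarith : 0 < 1 - S) (by linarith : 1 - S ≤ 1)]

/-- the quantity `D̃ = ∑ᵢⱼ cᵢcⱼ ∂²F/∂cᵢ∂cⱼ` satisfies
`D̃ = c̄/(1-∑bᵢcᵢ)² - ∑ᵢⱼ aᵢⱼcᵢcⱼ`, hence `D̃ ≥ p`. -/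
theorem stmt13 (n : ℕ) (b : Fin n → ℝ) (a : Fin n → Fin n → ℝ)
    (hb : ∀ i, 0 < b i) (ha : ∀ i j, a i j = a j i)
    (c : Fin n → ℝ) (hc : ∀ i, 0 < c i) (hbc : ∑ j, b j * c j < 1)
    (σ : ℝ) (hσ : σ = 1 / (1 - ∑ k, b k * c k))
    (H : Fin n → Fin n → ℝ)
    (hH : ∀ i j, H i j = (b i + b j) * σ + b i * b j * (∑ k, c k) * σ ^ 2
      + (if i = j then (1:ℝ) else 0) / c i - a i j)
    (Dt p : ℝ)
    (hDt : Dt = ∑ i, ∑ j, c i * c j * H i j)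
    (hp : p = (∑ i, c i) / (1 - ∑ j, b j * c j) - ∑ i, ∑ j, a i j * c i * c j) :
    Dt = (∑ i, c i) / (1 - ∑ i, b i * c i) ^ 2 - ∑ i, ∑ j, a i j * c i * c j
      ∧ Dt ≥ p :=
  stmt13_general n b a hb c hc hbc σ hσ H hH Dt p hDt hp
end

section
/- Let b₁,…,bₙ > 0 and c ∈ D. Then 0 ≤ −log(1 − ∑ᵢ bᵢcᵢ) ≤ C(1 + p) for a constant C depending only on b₁,…,bₙ and the matrix (aᵢⱼ), where p = c̄/(1 − ∑ⱼ bⱼcⱼ) − ∑ᵢⱼ aᵢⱼcᵢcⱼ is the van der Waals pressure. -/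
/-- there is a constant `C`, depending only on `b` and `(aᵢⱼ)`,
such that `0 ≤ -log(1 - ∑ᵢ bᵢcᵢ) ≤ C(1 + p)` for all `c` in the domain `D`,
where `p` is the van der Waals pressure. (As in the paper, the matrix `(aᵢⱼ)`
is nonnegative and satisfies the smallness condition `K > 0` of (1.7).) -/
theorem stmt19 (n : ℕ) (hn : 0 < n) (b : Fin n → ℝ) (a : Fin n → Fin n → ℝ)
    (hb : ∀ i, 0 < b i) (hapos : ∀ i j, 0 ≤ a i j)
    (hK : 0 < 1 - ⨆ i, ⨆ j, a i j / b i) :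
    ∃ C > 0, ∀ c : Fin n → ℝ, (∀ i, 0 < c i) → (∑ j, b j * c j < 1) →
      ∀ p : ℝ,
        p = (∑ i, c i) / (1 - ∑ j, b j * c j) - ∑ i, ∑ j, a i j * c i * c j →
        0 ≤ -Real.log (1 - ∑ i, b i * c i) ∧
        -Real.log (1 - ∑ i, b i * c i) ≤ C * (1 + p) := by
  haveI : Nonempty (Fin n) := ⟨⟨0, hn⟩⟩
  set θ : ℝ := ⨆ i, ⨆ j, a i j / b i with hθdef
  have hbdd : ∀ (f : Fin n → ℝ), BddAbove (Set.range f) :=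
    fun f => (Set.finite_range f).bddAbove
  have hθle : ∀ i j, a i j / b i ≤ θ := fun i j =>
    le_trans (le_ciSup (hbdd fun j => a i j / b i) j)
      (le_ciSup (hbdd fun i => ⨆ j, a i j / b i) i)
  have hab : ∀ i j, a i j ≤ θ * b i := fun i j => by
    have := hθle i j
    rw [div_le_iff₀ (hb i)] at this
    linarith [this]
  have hθ0 : 0 ≤ θ := le_trans (div_nonneg (hapos ⟨0, hn⟩ ⟨0, hn⟩) (hb ⟨0, hn⟩).le)
    (hθle ⟨0, hn⟩ ⟨0, hn⟩)
  have hθ1 : θ < 1 := by linarith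
  -- B = sup of b
  set B : ℝ := ⨆ i, b i with hBdef
  have hBle : ∀ i, b i ≤ B := fun i => le_ciSup (hbdd b) i
  have hB0 : 0 < B := lt_of_lt_of_le (hb ⟨0, hn⟩) (hBle ⟨0, hn⟩)
  set K : ℝ := 2 * B / (1 - θ) with hKdef
  have hKpos : 0 < K := by positivity
  clear_value θ B K
  refine ⟨2 + K, by linarith, ?_⟩
  intro c hc hsum p hp
  set s : ℝ := ∑ j, b j * c j with hsdef
  have hs0 : 0 < s := Finset.sum_pos (fun i _ => mul_pos (hb i) (hc i)) Finset.univ_nonempty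
  set t : ℝ := 1 - s with htdef
  have ht : 0 < t := by simp only [htdef]; linarith
  have ht1 : t ≤ 1 := by simp only [htdef]; linarith
  set cbar : ℝ := ∑ i, c i with hcbardef
  have hcbar : 0 < cbar := Finset.sum_pos (fun i _ => hc i) Finset.univ_nonempty
  set A : ℝ := ∑ i, ∑ j, a i j * c i * c j with hAdef
  have hAnn : 0 ≤ A := Finset.sum_nonneg fun i _ => Finset.sum_nonneg fun j _ =>
    mul_nonneg (mul_nonneg (hapos i j) (hc i).le) (hc j).le
  have hA : A ≤ θ * s * cbar := by
    have h1 : A ≤ ∑ i, ∑ j, θ * b i * c i * c j :=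
      Finset.sum_le_sum fun i _ => Finset.sum_le_sum fun j _ =>
        mul_le_mul_of_nonneg_right (mul_le_mul_of_nonneg_right (hab i j) (hc i).le) (hc j).le
    have h2 : ∑ i, ∑ j, θ * b i * c i * c j = θ * s * cbar := by
      rw [hsdef, hcbardef, Finset.sum_comm]
      simp only [Finset.mul_sum, Finset.sum_mul]
      exact Finset.sum_congr rfl fun i _ => Finset.sum_congr rfl fun j _ => by ring
    linarith [h1, h2.le, h2.ge]
  have hp1 : p * t = cbar - A * t := by
    rw [hp]
    show ((∑ i, c i) / (1 - ∑ j, b j * c j) - A) * t = cbar - A * t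
    rw [← hsdef, ← hcbardef, ← htdef]
    field_simp
  clear_value s t cbar A
  have hpt : (1 - θ) * cbar ≤ p * t := by
    have e1 : A * t ≤ A := by nlinarith [hAnn, ht1]
    have e2 : θ * s * cbar ≤ θ * cbar := by nlinarith [hθ0, hcbar.le, hsum]
    nlinarith [hA]
  have hppos : 0 < p := by
    have h1 : 0 < p * t := lt_of_lt_of_le (by nlinarith [hθ1, hcbar]) hpt
    nlinarith [h1, ht]
  -- log bounds
  have hlog0 : Real.log t ≤ 0 := Real.log_nonpos ht.le ht1
  have hlog1 : -Real.log t ≤ 1 / t - 1 := by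
    rw [← Real.log_inv]
    have := Real.log_le_sub_one_of_pos (inv_pos.mpr ht)
    simpa [one_div] using this
  constructor
  · show (0:ℝ) ≤ -Real.log t
    linarith
  · show -Real.log t ≤ (2 + K) * (1 + p)
    have hmain : 1 ≤ (2 + K) * (1 + p) * t := by
      rcases le_or_gt s (1/2) with hhalf | hhalf
      · have ht2 : (1:ℝ)/2 ≤ t := by simp only [htdef]; linarith
        nlinarith [mul_nonneg hppos.le ht.le, mul_nonneg hKpos.le ht.le,
          mul_nonneg hKpos.le (mul_nonneg hppos.le ht.le)]
      · -- s > 1/2, so B * cbar > 1/2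
        have hBc : 1/2 < B * cbar := by
          have : s ≤ B * cbar := by
            rw [hsdef, hcbardef, Finset.mul_sum]
            exact Finset.sum_le_sum fun i _ =>
              mul_le_mul_of_nonneg_right (hBle i) (hc i).le
          linarith
        have hKθ : K * (1 - θ) = 2 * B := by
          rw [hKdef]; field_simp
        have hKpt : K * ((1 - θ) * cbar) ≤ K * (p * t) :=
          mul_le_mul_of_nonneg_left hpt hKpos.le
        have e0 : K * ((1 - θ) * cbar) = 2 * B * cbar := by
          rw [← mul_assoc, hKθ]
        have e1 : 1 ≤ K * (p * t) := by linarith [hKpt, e0, hBc]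
        linarith [e1, mul_nonneg hppos.le ht.le, mul_nonneg hKpos.le ht.le, ht.le,
          mul_nonneg hKpos.le (mul_nonneg hppos.le ht.le),
          mul_nonneg hKpos.le ht.le]
    have h1t : 1 / t ≤ (2 + K) * (1 + p) := by
      rw [div_le_iff₀ ht]; linarith
    linarith
end
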